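/- For a binary tree B and each index i, the number of unit squares of the grid lying between the i-th north step of u(B) and the i-th north step of v(B) (which are at the same height) equals the right height of the i-th left edge of B in the symmetric order. -/

import Mathlib

/-- A lattice path on the square grid starting at `(0,0)`:
`true` = north step `N`, `false` = east step `E`. -/
abbrev LPath := List Bool

/-- The x-coordinate of the rightmost point at height `y` lying weakly above `v`,
i.e. the number of east steps of `v` occurring at height at most `y`. -/
def horizAbs (v : LPath) (y : ℕ) : ℕ :=
  ((List.range v.length).filter
    (fun i => v.getD i true = false ∧ (v.take i).count true ≤ y)).length

/-- The horizontal distance `horiz_v(p)` of the point `p` of `u` reached after `j` steps: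
the maximal number of east steps that can be appended at `p` without crossing `v`. -/
def horiz (v u : LPath) (j : ℕ) : ℕ :=
  horizAbs v ((u.take j).count true) - (u.take j).count false

/-- `u` has the same endpoints as `v` (same numbers of north and east steps) and
stays weakly above `v`. -/
def WeaklyAbove (u v : LPath) : Prop :=
  u.count true = v.count true ∧ u.count false = v.count false ∧
  ∀ j : ℕ, (u.take j).count false ≤ horizAbs v ((u.take j).count true)

/-- The covering relation of `Tam(v)`: the point `p` of `u` after `j` steps is preceded
by an east step and followed by a north step, `k` is the index of the first point `p'`
after `p` with `horiz_v(p') = horiz_v(p)`, and `u'` is obtained from `u` by exchanging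
that east step with the subpath of `u` from `p` to `p'`. -/
def TamCovers (v u u' : LPath) : Prop :=
  ∃ j k : ℕ, 0 < j ∧ j < k ∧ k ≤ u.length ∧
    u.getD (j - 1) true = false ∧ u.getD j false = true ∧
    horiz v u k = horiz v u j ∧
    (∀ l : ℕ, j < l → l < k → horiz v u l ≠ horiz v u j) ∧
    u' = u.take (j - 1) ++ (u.drop j).take (k - j) ++ [false] ++ u.drop k

/-- The order of `Tam(v)`: the reflexive-transitive closure of the covering relation. -/
def TamLe (v : LPath) : LPath → LPath → Prop := Relation.ReflTransGen (TamCovers v)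

/-- The underlying set of `Tam(v)`: all paths weakly above `v` with the same endpoints. -/
abbrev TamSet (v : LPath) := {u : LPath // WeaklyAbove u v}

/-- Binary trees: either empty, or a root vertex with left and right binary subtrees. -/
inductive BTree where
  | nil : BTree
  | node : BTree → BTree → BTree
deriving DecidableEq

/-- The alphabet `{a, ā, b, b̄}`. -/
inductive Letter where
  | a : Letter
  | abar : Letter
  | b : Letter
  | bbar : Letter
deriving DecidableEq

/-- The word `w(B)` obtained by walking clockwise around `B` starting at the root,
writing `a` (resp. `ā`) at the first (resp. second) traversal of each left edge and
`b` (resp. `b̄`) at the first (resp. second) traversal of each right edge. -/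
def wordOf : BTree → List Letter
  | .nil => []
  | .node l r =>
      (if l = BTree.nil then [] else Letter.a :: (wordOf l ++ [Letter.abar])) ++
      (if r = BTree.nil then [] else Letter.b :: (wordOf r ++ [Letter.bbar]))

/-- The path `u(B)`: the subword of `w(B)` in the letters `{ā, b̄}`, with `ā` read as a
north step (`true`) and `b̄` as an east step (`false`). -/
def uPath (B : BTree) : LPath :=
  (wordOf B).filterMap fun x =>
    match x with
    | Letter.abar => some true
    | Letter.bbar => some false
    | _ => none

/-- The canopy `v(B)`: the subword of `w(B)` in the letters `{ā, b}`, with `ā` read as a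
north step (`true`) and `b` as an east step (`false`). -/
def vPath (B : BTree) : LPath :=
  (wordOf B).filterMap fun x =>
    match x with
    | Letter.abar => some true
    | Letter.b => some false
    | _ => none

/-- The number of vertices of a binary tree. -/
def bsize : BTree → ℕ
  | .nil => 0
  | .node l r => bsize l + bsize r + 1

/-- The positions (indices) of the north steps of a path. -/
def northPositions (p : LPath) : List ℕ :=
  (List.range p.length).filter (fun j => p.getD j false = true)

/-- The x-coordinate of the `i`-th north step (0-indexed) of a path. -/
def xOfNorth (p : LPath) (i : ℕ) : ℕ :=
  (p.take ((northPositions p).getD i 0)).count false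

/-- The right heights of the left edges of a binary tree, listed in the symmetric
(in-)order of their father vertices; `h` is the right height of the root. -/
def leftEdgeRH : BTree → ℕ → List ℕ
  | .nil, _ => []
  | .node l r, h =>
      leftEdgeRH l h ++ (if l = BTree.nil then [] else [h]) ++ leftEdgeRH r (h + 1)

/-!
Record, for a pair of paths `u`, `v` with the same number of east steps, the list of
horizontal offsets between their corresponding north steps. Such offset lists concatenate
along concatenation of paths, and moving an east step from the end of `u` to the front of
`v` raises every offset by one. At the root of `B = (L, r, R)` one has
`u(B) = u(L) ā u(R) b̄` and `v(B) = v(L) ā b v(R)` (omitting the parts of empty subtrees):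
the north step closing the left edge has offset `0`, its right height, and the step `b`
raises the offsets coming from `R` by one, exactly as the right heights in `R` go up by one.
-/

def northXs : LPath → List ℕ
  | [] => []
  | true :: t => 0 :: northXs t
  | false :: t => (northXs t).map (· + 1)

lemma northXs_append (p q : LPath) :
    northXs (p ++ q) = northXs p ++ (northXs q).map (· + p.count false) := by
  induction p with
  | nil => simp [northXs]
  | cons c t ih =>
    cases c <;> simp [northXs, ih, List.map_map, Function.comp_def, Nat.add_assoc]

lemma northPositions_cons (c : Bool) (t : LPath) :
    northPositions (c :: t) = (if c then [0] else []) ++ (northPositions t).map Nat.succ := by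
  unfold northPositions
  rw [List.length_cons, List.range_succ_eq_map, List.filter_cons, List.filter_map]
  cases c <;> rfl

lemma map_northPositions_eq_northXs (p : LPath) :
    (northPositions p).map (fun j => (p.take j).count false) = northXs p := by
  induction p with
  | nil => rfl
  | cons c t ih =>
    rw [northPositions_cons]
    cases c <;> simp [northXs, ← ih, Function.comp_def]

lemma xOfNorth_eq_getD_northXs (p : LPath) (i : ℕ) : xOfNorth p i = (northXs p).getD i 0 := by
  rw [← map_northPositions_eq_northXs]
  exact (List.getD_map _ 0 (fun j => (p.take j).count false)).symm

lemma getD_zipWith_add {M : Type*} [AddZeroClass M] {xs ys : List M}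
    (h : xs.length = ys.length) (i : ℕ) :
    (List.zipWith (· + ·) xs ys).getD i 0 = xs.getD i 0 + ys.getD i 0 := by
  simp only [List.getD_eq_getElem?_getD, List.getElem?_zipWith]
  by_cases hi : i < xs.length <;> simp [hi, h ▸ hi]

structure NorthShift (u v : LPath) (L : List ℕ) : Prop where
  northXs_eq : northXs v = List.zipWith (· + ·) (northXs u) L
  length_eq : (northXs u).length = L.length
  count_false_eq : u.count false = v.count false

namespace NorthShift

lemma nil : NorthShift [] [] [] := ⟨rfl, rfl, rfl⟩

lemma north : NorthShift [true] [true] [0] := ⟨rfl, rfl, rfl⟩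

lemma append {u v u' v' : LPath} {L L' : List ℕ} (h : NorthShift u v L)
    (h' : NorthShift u' v' L') : NorthShift (u ++ u') (v ++ v') (L ++ L') where
  northXs_eq := by
    rw [northXs_append, northXs_append, List.zipWith_append h.length_eq, h.northXs_eq,
      h'.northXs_eq, h.count_false_eq, List.map_zipWith, List.zipWith_map_left]
    congr 2
    funext a b
    omega
  length_eq := by simp [northXs_append, h.length_eq, h'.length_eq]
  count_false_eq := by simp [h.count_false_eq, h'.count_false_eq]

lemma east {u v : LPath} {L : List ℕ} (h : NorthShift u v L) :
    NorthShift (u ++ [false]) (false :: v) (L.map (· + 1)) where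
  northXs_eq := by
    simp [northXs, northXs_append, h.northXs_eq, List.map_zipWith, List.zipWith_map_right,
      Nat.add_assoc]
  length_eq := by simp [northXs_append, northXs, h.length_eq]
  count_false_eq := by simp [h.count_false_eq]

end NorthShift

lemma uPath_node (l r : BTree) :
    uPath (.node l r) =
      (if l = .nil then [] else uPath l ++ [true]) ++
      (if r = .nil then [] else uPath r ++ [false]) := by
  simp only [uPath, wordOf]
  split_ifs <;> simp [List.filterMap_append]

lemma vPath_node (l r : BTree) :
    vPath (.node l r) =
      (if l = .nil then [] else vPath l ++ [true]) ++
      (if r = .nil then [] else false :: vPath r) := by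
  simp only [vPath, wordOf]
  split_ifs <;> simp [List.filterMap_append]

lemma leftEdgeRH_add (B : BTree) (h k : ℕ) :
    leftEdgeRH B (h + k) = (leftEdgeRH B h).map (· + k) := by
  induction B generalizing h with
  | nil => rfl
  | node l r ihl ihr =>
    simp only [leftEdgeRH, ihl, Nat.add_right_comm h k 1, ihr, List.map_append]
    split_ifs <;> simp

lemma northShift_uPath_vPath (B : BTree) : NorthShift (uPath B) (vPath B) (leftEdgeRH B 0) := by
  induction B with
  | nil => exact .nil
  | node l r ihl ihr =>
    rw [uPath_node, vPath_node, leftEdgeRH, ← Nat.zero_add 1, leftEdgeRH_add]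
    refine .append ?_ ?_
    · split_ifs with hl
      · subst hl; exact .nil
      · exact ihl.append .north
    · split_ifs with hr
      · subst hr; exact .nil
      · exact ihr.east

theorem squares_eq_right_height_general (B : BTree) (i : ℕ) :
    xOfNorth (vPath B) i = xOfNorth (uPath B) i + (leftEdgeRH B 0).getD i 0 := by
  have hB := northShift_uPath_vPath B
  rw [xOfNorth_eq_getD_northXs, xOfNorth_eq_getD_northXs, hB.northXs_eq,
    getD_zipWith_add hB.length_eq]

/-- **Lemma 6.** For a binary tree `B`, the number of unit squares between the `i`-th
north step of `u(B)` and the `i`-th north step of `v(B)` (they are at the same height,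
and the number of unit squares is the difference of their x-coordinates) equals the
right height of the `i`-th left edge of `B` in the symmetric order. -/
theorem squares_eq_right_height (B : BTree) (i : ℕ) (hi : i < (vPath B).count true) :
    xOfNorth (vPath B) i = xOfNorth (uPath B) i + (leftEdgeRH B 0).getD i 0 :=
  squares_eq_right_height_general B i
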